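/- arXiv:1909.03798 — 3 statements merged into one kernel-verified Lean document; each statement's English description precedes it below -/
import Mathlib

section
/- (Convergence Theorem with two coupled variables.) For every ε > 0 and every δ > 0 there exists M such that for all m ≥ M and all l satisfying the coupled sample rule for ε, one has P( R − R_emp(m,l) > ε ) < δ. In other words, the empirical global risk converges in probability to the global risk as m and l tend to infinity jointly under the coupled sample rule. -/
set_option maxHeartbeats 1000000

open MeasureTheory ProbabilityTheory

private lemma int_of_bdd {α : Type*} [MeasurableSpace α] {P : Measure α} [IsFiniteMeasure P]
    {f : α → ℝ} (hf : AEStronglyMeasurable f P) {C : ℝ} (h : ∀ x, |f x| ≤ C) :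
    Integrable f P :=
  Integrable.mono' (integrable_const C) hf (Filter.Eventually.of_forall fun x => by
    simpa [Real.norm_eq_abs] using h x)

private lemma avg_mem {n : ℕ} (hn : 1 ≤ n) {a b : ℝ} {v : ℕ → ℝ}
    (h : ∀ k ∈ Finset.range n, a ≤ v k ∧ v k ≤ b) :
    a ≤ (1/(n:ℝ)) * ∑ k ∈ Finset.range n, v k ∧
      (1/(n:ℝ)) * ∑ k ∈ Finset.range n, v k ≤ b := by
  have hn' : (0:ℝ) < n := by exact_mod_cast hn
  have h1 : (n:ℝ) * a ≤ ∑ k ∈ Finset.range n, v k := by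
    have := Finset.sum_le_sum (fun k hk => (h k hk).1)
    simpa [Finset.sum_const, Finset.card_range, mul_comm] using this
  have h2 : ∑ k ∈ Finset.range n, v k ≤ (n:ℝ) * b := by
    have := Finset.sum_le_sum (fun k hk => (h k hk).2)
    simpa [Finset.sum_const, Finset.card_range, mul_comm] using this
  constructor
  · rw [one_div, inv_mul_eq_div, le_div_iff₀ hn']; linarith
  · rw [one_div, inv_mul_eq_div, div_le_iff₀ hn']; linarith

/-- Second moment bound for a doubly-indexed array with uncorrelated off-diagonal terms. -/
private lemma sum_sq_bound {Ω : Type*} [MeasurableSpace Ω] (P : Measure Ω)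
    [IsProbabilityMeasure P]
    (Y : ℕ → ℕ → Ω → ℝ) (hmeas : ∀ i j, Measurable (Y i j))
    {C : ℝ} (hC : 0 ≤ C) (hbd : ∀ i j ω, |Y i j ω| ≤ C)
    (hzero : ∀ i i' j j', i ≠ i' → j ≠ j' → ∫ ω, Y i j ω * Y i' j' ω ∂P = 0)
    (m l : ℕ) :
    ∫ ω, (∑ j ∈ Finset.range m, ∑ i ∈ Finset.range l, Y i j ω)^2 ∂P
      ≤ C^2 * ((m:ℝ)^2 * l + m * l^2) := by
  have hint4 : ∀ i j i' j', Integrable (fun ω => Y i j ω * Y i' j' ω) P := by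
    intro i j i' j'
    refine int_of_bdd ((hmeas i j).mul (hmeas i' j')).aestronglyMeasurable (C := C * C) fun ω => ?_
    rw [abs_mul]
    exact mul_le_mul (hbd _ _ _) (hbd _ _ _) (abs_nonneg _) hC
  have expand : ∫ ω, (∑ j ∈ Finset.range m, ∑ i ∈ Finset.range l, Y i j ω)^2 ∂P
      = ∑ j ∈ Finset.range m, ∑ j' ∈ Finset.range m, ∑ i ∈ Finset.range l,
          ∑ i' ∈ Finset.range l, ∫ ω, Y i j ω * Y i' j' ω ∂P := by
    simp_rw [sq, Finset.sum_mul_sum]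
    rw [integral_finset_sum _ (fun j _ => integrable_finset_sum _ fun j' _ =>
      integrable_finset_sum _ fun i _ => integrable_finset_sum _ fun i' _ => hint4 i j i' j')]
    refine Finset.sum_congr rfl fun j _ => ?_
    rw [integral_finset_sum _ (fun j' _ => integrable_finset_sum _ fun i _ =>
      integrable_finset_sum _ fun i' _ => hint4 i j i' j')]
    refine Finset.sum_congr rfl fun j' _ => ?_
    rw [integral_finset_sum _ (fun i _ => integrable_finset_sum _ fun i' _ => hint4 i j i' j')]
    refine Finset.sum_congr rfl fun i _ => ?_
    rw [integral_finset_sum _ (fun i' _ => hint4 i j i' j')]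
  have hterm : ∀ i j i' j', i ∈ Finset.range l → i' ∈ Finset.range l →
      j ∈ Finset.range m → j' ∈ Finset.range m →
      ∫ ω, Y i j ω * Y i' j' ω ∂P
        ≤ (if i = i' then C^2 else 0) + (if j = j' then C^2 else 0) := by
    intro i j i' j' _ _ _ _
    have hC2 : (0:ℝ) ≤ C^2 := sq_nonneg C
    have hb : ∫ ω, Y i j ω * Y i' j' ω ∂P ≤ C^2 := by
      calc ∫ ω, Y i j ω * Y i' j' ω ∂P ≤ ∫ _ω, C^2 ∂P := by
            refine integral_mono (hint4 i j i' j') (integrable_const _) fun ω => ?_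
            calc Y i j ω * Y i' j' ω ≤ |Y i j ω * Y i' j' ω| := le_abs_self _
              _ ≤ C * C := by
                  rw [abs_mul]
                  exact mul_le_mul (hbd _ _ _) (hbd _ _ _) (abs_nonneg _) hC
              _ = C^2 := (sq C).symm
        _ = C^2 := by simp
    by_cases hi : i = i'
    · rw [if_pos hi]
      have : (0:ℝ) ≤ (if j = j' then C^2 else 0) := by positivity
      linarith
    · by_cases hj : j = j'
      · rw [if_neg hi, if_pos hj]; linarith
      · rw [hzero i i' j j' hi hj, if_neg hi, if_neg hj]; norm_num
  rw [expand]
  calc (∑ j ∈ Finset.range m, ∑ j' ∈ Finset.range m, ∑ i ∈ Finset.range l,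
          ∑ i' ∈ Finset.range l, ∫ ω, Y i j ω * Y i' j' ω ∂P)
      ≤ ∑ j ∈ Finset.range m, ∑ j' ∈ Finset.range m, ∑ i ∈ Finset.range l,
          ∑ i' ∈ Finset.range l,
            ((if i = i' then C^2 else 0) + (if j = j' then C^2 else 0)) := by
        refine Finset.sum_le_sum fun j hj => Finset.sum_le_sum fun j' hj' =>
          Finset.sum_le_sum fun i hi => Finset.sum_le_sum fun i' hi' => ?_
        exact hterm i j i' j' hi hi' hj hj'
    _ = C^2 * ((m:ℝ)^2 * l + m * l^2) := by
        simp [Finset.sum_add_distrib, Finset.sum_ite_eq, Finset.mem_range, Finset.sum_const,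
          Finset.card_range, nsmul_eq_mul]
        rw [Finset.sum_congr rfl (fun x hx => if_pos (Finset.mem_range.mp hx)),
          Finset.sum_congr rfl (fun x (hx : x ∈ Finset.range m) =>
            if_pos (Finset.mem_range.mp hx))]
        simp [Finset.sum_const, Finset.card_range, nsmul_eq_mul]
        ring

/-- Zero covariance of the recentered kernel evaluated at independent coordinates. -/
private lemma zero_cov {Ω Z T : Type*} [MeasurableSpace Ω] [MeasurableSpace Z] [MeasurableSpace T]
    (P : Measure Ω) [IsProbabilityMeasure P]
    (μ : Measure Z) [IsProbabilityMeasure μ] (ν : Measure T) [IsProbabilityMeasure ν]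
    (zs : ℕ → Ω → Z) (τs : ℕ → Ω → T)
    (hzmeas : ∀ i, Measurable (zs i)) (hτmeas : ∀ j, Measurable (τs j))
    (hzlaw : ∀ i, Measure.map (zs i) P = μ) (hτlaw : ∀ j, Measure.map (τs j) P = ν)
    (hziid : iIndepFun zs P)
    (hτiid : iIndepFun τs P)
    (hcross : IndepFun (fun ω i => zs i ω) (fun ω j => τs j ω) P)
    (Q : Z → T → ℝ) (hQmeas : Measurable fun p : Z × T => Q p.1 p.2)
    {C : ℝ} (hbd : ∀ z τ, |Q z τ - (∫ τ, ∫ z, Q z τ ∂μ ∂ν)| ≤ C)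
    (Qint : Integrable (fun p : Z × T => Q p.1 p.2) (μ.prod ν))
    {i i' j j' : ℕ} (hi : i ≠ i') (hj : j ≠ j') :
    ∫ ω, (Q (zs i ω) (τs j ω) - (∫ τ, ∫ z, Q z τ ∂μ ∂ν))
        * (Q (zs i' ω) (τs j' ω) - (∫ τ, ∫ z, Q z τ ∂μ ∂ν)) ∂P = 0 := by
  set R : ℝ := ∫ τ, ∫ z, Q z τ ∂μ ∂ν with hR
  set f : Ω → ℕ → Z := fun ω i => zs i ω with hfdef
  set g : Ω → ℕ → T := fun ω j => τs j ω with hgdef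
  have hf : Measurable f := measurable_pi_lambda _ hzmeas
  have hg : Measurable g := measurable_pi_lambda _ hτmeas
  have hpair : Measure.map (fun ω => (f ω, g ω)) P = (Measure.map f P).prod (Measure.map g P) :=
    (indepFun_iff_map_prod_eq_prod_map_map hf.aemeasurable hg.aemeasurable).mp hcross
  set π1 : (ℕ → Z) → Z × Z := fun a => (a i, a i') with hπ1def
  set π2 : (ℕ → T) → T × T := fun a => (a j, a j') with hπ2def
  have hπ1 : Measurable π1 := (measurable_pi_apply i).prodMk (measurable_pi_apply i')
  have hπ2 : Measurable π2 := (measurable_pi_apply j).prodMk (measurable_pi_apply j')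
  have hz2 : Measure.map (fun ω => (zs i ω, zs i' ω)) P = μ.prod μ := by
    have h := (hziid.indepFun hi)
    rw [indepFun_iff_map_prod_eq_prod_map_map (hzmeas i).aemeasurable
      (hzmeas i').aemeasurable] at h
    rw [h, hzlaw, hzlaw]
  have hτ2 : Measure.map (fun ω => (τs j ω, τs j' ω)) P = ν.prod ν := by
    have h := (hτiid.indepFun hj)
    rw [indepFun_iff_map_prod_eq_prod_map_map (hτmeas j).aemeasurable
      (hτmeas j').aemeasurable] at h
    rw [h, hτlaw, hτlaw]
  have hmapf : Measure.map π1 (Measure.map f P) = μ.prod μ := by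
    rw [Measure.map_map hπ1 hf]; exact hz2
  have hmapg : Measure.map π2 (Measure.map g P) = ν.prod ν := by
    rw [Measure.map_map hπ2 hg]; exact hτ2
  have hPf : IsProbabilityMeasure (Measure.map f P) := Measure.isProbabilityMeasure_map hf.aemeasurable
  have hPg : IsProbabilityMeasure (Measure.map g P) := Measure.isProbabilityMeasure_map hg.aemeasurable
  set Φ : Ω → (Z × Z) × (T × T) := fun ω => ((zs i ω, zs i' ω), (τs j ω, τs j' ω)) with hΦdef
  have hΦmeas : Measurable Φ :=
    (((hzmeas i).prodMk (hzmeas i')).prodMk ((hτmeas j).prodMk (hτmeas j')))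
  have hΦ : Measure.map Φ P = (μ.prod μ).prod (ν.prod ν) := by
    have hcomp : Φ = (Prod.map π1 π2) ∘ (fun ω => (f ω, g ω)) := rfl
    rw [hcomp, ← Measure.map_map (hπ1.prodMap hπ2) (hf.prodMk hg), hpair,
      ← Measure.map_prod_map _ _ hπ1 hπ2, hmapf, hmapg]
  set F : (Z × Z) × (T × T) → ℝ := fun p => (Q p.1.1 p.2.1 - R) * (Q p.1.2 p.2.2 - R) with hFdef
  have hFmeas : Measurable F := by
    exact ((hQmeas.comp (measurable_fst.fst.prodMk measurable_snd.fst)).sub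
      measurable_const).mul
      ((hQmeas.comp (measurable_fst.snd.prodMk measurable_snd.snd)).sub measurable_const)
  have hFbd : ∀ p, |F p| ≤ C * C := fun p => by
    rw [hFdef, abs_mul]
    have h0 : (0:ℝ) ≤ C := le_trans (abs_nonneg _) (hbd p.1.1 p.2.1)
    exact mul_le_mul (hbd _ _) (hbd _ _) (abs_nonneg _) h0
  have hFint : Integrable F ((μ.prod μ).prod (ν.prod ν)) :=
    int_of_bdd hFmeas.aestronglyMeasurable hFbd
  have key : ∫ ω, F (Φ ω) ∂P = ∫ p, F p ∂((μ.prod μ).prod (ν.prod ν)) := by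
    rw [← hΦ, integral_map hΦmeas.aemeasurable hFmeas.aestronglyMeasurable]
  have hQτint : ∀ z, Integrable (fun t => Q z t) ν := by
    intro z
    refine int_of_bdd ((hQmeas.comp (measurable_const.prodMk measurable_id))).aestronglyMeasurable
      (C := |R| + C) fun t => ?_
    have := hbd z t
    have := abs_nonneg R
    calc |Q z t| = |(Q z t - R) + R| := by ring_nf
      _ ≤ |Q z t - R| + |R| := abs_add_le _ _
      _ ≤ |R| + C := by linarith [hbd z t]
  set ψ : Z → ℝ := fun z => ∫ t, (Q z t - R) ∂ν with hψdef
  have hψint : ∀ z, ψ z = (∫ t, Q z t ∂ν) - R := by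
    intro z
    show ∫ t, (Q z t - R) ∂ν = (∫ t, Q z t ∂ν) - R
    rw [integral_sub (hQτint z) (integrable_const R), integral_const]
    simp
  have hψtot : ∫ z, ψ z ∂μ = 0 := by
    have hswap : ∫ z, ∫ t, Q z t ∂ν ∂μ = R := by
      rw [hR]
      exact integral_integral_swap Qint
    have hIm : Integrable (fun z => ∫ t, Q z t ∂ν) μ := by
      refine int_of_bdd ?_ (C := |R| + C) fun z => ?_
      · have : StronglyMeasurable (Function.uncurry Q) := hQmeas.stronglyMeasurable
        exact (this.integral_prod_right).aestronglyMeasurable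
      · have h1 : |(∫ t, Q z t ∂ν) - R| ≤ C := by
          have : (∫ t, Q z t ∂ν) - R = ψ z := (hψint z).symm
          rw [this, hψdef]
          calc |∫ t, Q z t - R ∂ν| ≤ ∫ t, |Q z t - R| ∂ν := by
                simpa [Real.norm_eq_abs] using
                  norm_integral_le_integral_norm (μ := ν) (fun t => Q z t - R)
            _ ≤ ∫ _t, C ∂ν := integral_mono ((hQτint z).sub (integrable_const R)).abs
                (integrable_const C) (fun t => hbd z t)
            _ = C := by simp
        calc |∫ t, Q z t ∂ν| = |((∫ t, Q z t ∂ν) - R) + R| := by ring_nf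
          _ ≤ |(∫ t, Q z t ∂ν) - R| + |R| := abs_add_le _ _
          _ ≤ |R| + C := by linarith
    simp_rw [hψint]
    rw [integral_sub hIm (integrable_const R), integral_const, hswap]
    simp
  have main : ∫ p, F p ∂((μ.prod μ).prod (ν.prod ν)) = (∫ z, ψ z ∂μ) * (∫ z, ψ z ∂μ) := by
    rw [integral_prod F hFint]
    have hinner : ∀ x : Z × Z, ∫ y : T × T, F (x, y) ∂(ν.prod ν) = ψ x.1 * ψ x.2 := by
      intro x
      exact integral_prod_mul (μ := ν) (ν := ν) (fun t => Q x.1 t - R) (fun t => Q x.2 t - R)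
    simp_rw [hinner]
    exact integral_prod_mul (fun z => ψ z) (fun z => ψ z)
  calc ∫ ω, (Q (zs i ω) (τs j ω) - R) * (Q (zs i' ω) (τs j' ω) - R) ∂P
      = ∫ ω, F (Φ ω) ∂P := rfl
    _ = (∫ z, ψ z ∂μ) * (∫ z, ψ z ∂μ) := by rw [key, main]
    _ = 0 := by rw [hψtot, mul_zero]

/-- Convergence theorem with two coupled variables: under the coupled sample rule, the
empirical global risk converges in probability to the global risk as `m, l → ∞` jointly. -/
theorem stmt_4 {Ω Z T : Type*} [MeasurableSpace Ω] [MeasurableSpace Z] [MeasurableSpace T]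
    (P : Measure Ω) [IsProbabilityMeasure P]
    (μ : Measure Z) [IsProbabilityMeasure μ] (ν : Measure T) [IsProbabilityMeasure ν]
    (zs : ℕ → Ω → Z) (τs : ℕ → Ω → T)
    (hzmeas : ∀ i, Measurable (zs i)) (hτmeas : ∀ j, Measurable (τs j))
    (hzlaw : ∀ i, Measure.map (zs i) P = μ) (hτlaw : ∀ j, Measure.map (τs j) P = ν)
    (hziid : iIndepFun zs P)
    (hτiid : iIndepFun τs P)
    (hcross : IndepFun (fun ω i => zs i ω) (fun ω j => τs j ω) P)
    (Q : Z → T → ℝ) (hQmeas : Measurable fun p : Z × T => Q p.1 p.2)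
    (Az Bz Aτ Bτ : ℝ) (hzlt : Az < Bz) (hτlt : Aτ < Bτ)
    (hQbd : ∀ z τ, Az ≤ Q z τ ∧ Q z τ ≤ Bz)
    (hRlobd : ∀ τ, Aτ ≤ (∫ z, Q z τ ∂μ) ∧ (∫ z, Q z τ ∂μ) ≤ Bτ)
    (ε δ : ℝ) (hε : 0 < ε) (hδ : 0 < δ) :
    ∃ M : ℕ, ∀ m ≥ M, ∀ l : ℕ,
      ((l : ℝ) > 2 * (Bz - Az) ^ 2 / ε ^ 2 * Real.log m +
        (Bz - Az) ^ 2 / (Bτ - Aτ) ^ 2 * m) →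
      P {ω | (∫ τ, ∫ z, Q z τ ∂μ ∂ν) -
          (1 / (m : ℝ)) * ∑ j ∈ Finset.range m,
            (1 / (l : ℝ)) * ∑ i ∈ Finset.range l, Q (zs i ω) (τs j ω) > ε}
        < ENNReal.ofReal δ := by
  set R : ℝ := ∫ τ, ∫ z, Q z τ ∂μ ∂ν with hRdef
  set C : ℝ := Bz - Az with hCdef
  set D : ℝ := Bτ - Aτ with hDdef
  have hC : 0 < C := by rw [hCdef]; linarith
  have hD : 0 < D := by rw [hDdef]; linarith
  set B0 : ℝ := max |Az| |Bz| with hB0def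
  have hQabs : ∀ z t, |Q z t| ≤ B0 := by
    intro z t
    have h1 := (hQbd z t).1
    have h2 := (hQbd z t).2
    rw [abs_le]
    constructor
    · have := neg_abs_le Az
      have := le_max_left |Az| |Bz|
      linarith
    · have := le_abs_self Bz
      have := le_max_right |Az| |Bz|
      linarith
  have Qint : Integrable (fun p : Z × T => Q p.1 p.2) (μ.prod ν) :=
    int_of_bdd hQmeas.aestronglyMeasurable (fun p => hQabs p.1 p.2)
  have hKmeas : ∀ i j, Measurable fun ω => Q (zs i ω) (τs j ω) := fun i j =>
    hQmeas.comp ((hzmeas i).prodMk (hτmeas j))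
  have hQzint : ∀ τ, Integrable (fun z => Q z τ) μ := fun τ =>
    int_of_bdd (hQmeas.comp (measurable_id.prodMk measurable_const)).aestronglyMeasurable
      (fun z => hQabs z τ)
  -- bounds on the local risk and global risk
  have hgbd : ∀ τ, Az ≤ (∫ z, Q z τ ∂μ) ∧ (∫ z, Q z τ ∂μ) ≤ Bz := by
    intro τ
    constructor
    · have := integral_mono (integrable_const Az) (hQzint τ) (fun z => (hQbd z τ).1)
      simpa using this
    · have := integral_mono (hQzint τ) (integrable_const Bz) (fun z => (hQbd z τ).2)
      simpa using this
  have hgmeas : StronglyMeasurable fun τ => ∫ z, Q z τ ∂μ := by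
    have : StronglyMeasurable (Function.uncurry Q) := hQmeas.stronglyMeasurable
    exact this.integral_prod_left
  have hgint : Integrable (fun τ => ∫ z, Q z τ ∂μ) ν := by
    refine int_of_bdd hgmeas.aestronglyMeasurable (C := B0) fun τ => ?_
    rw [abs_le]
    have h1 := (hgbd τ).1
    have h2 := (hgbd τ).2
    constructor
    · have := neg_abs_le Az
      have := le_max_left |Az| |Bz|
      simp only [hB0def] at *
      linarith
    · have := le_abs_self Bz
      have := le_max_right |Az| |Bz|
      simp only [hB0def] at *
      linarith
  have hRZ : Az ≤ R ∧ R ≤ Bz := by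
    constructor
    · have := integral_mono (integrable_const Az) hgint (fun τ => (hgbd τ).1)
      simpa [hRdef] using this
    · have := integral_mono hgint (integrable_const Bz) (fun τ => (hgbd τ).2)
      simpa [hRdef] using this
  have hYbd : ∀ z t, |Q z t - R| ≤ C := by
    intro z t
    have h1 := (hQbd z t).1
    have h2 := (hQbd z t).2
    rw [hCdef, abs_le]
    constructor <;> linarith [hRZ.1, hRZ.2]
  have hzero : ∀ i i' j j', i ≠ i' → j ≠ j' →
      ∫ ω, (Q (zs i ω) (τs j ω) - R) * (Q (zs i' ω) (τs j' ω) - R) ∂P = 0 := by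
    intro i i' j j' hi hj
    exact zero_cov P μ ν zs τs hzmeas hτmeas hzlaw hτlaw hziid hτiid hcross Q hQmeas
      hYbd Qint hi hj
  have hYmeas : ∀ i j, Measurable fun ω => Q (zs i ω) (τs j ω) - R := fun i j =>
    (hKmeas i j).sub measurable_const
  -- second moment bound
  have hmom : ∀ m l : ℕ, 1 ≤ m → 1 ≤ l →
      ∫ ω, ((1 / (m : ℝ)) * ∑ j ∈ Finset.range m,
        (1 / (l : ℝ)) * ∑ i ∈ Finset.range l, Q (zs i ω) (τs j ω) - R)^2 ∂P
      ≤ C^2 * (1/(m:ℝ) + 1/(l:ℝ)) := by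
    intro m l hm hl
    have hm0 : ((m:ℝ)) ≠ 0 := by
      have : (0:ℝ) < m := by exact_mod_cast hm
      exact ne_of_gt this
    have hl0 : ((l:ℝ)) ≠ 0 := by
      have : (0:ℝ) < l := by exact_mod_cast hl
      exact ne_of_gt this
    have hrepr : ∀ ω : Ω, (1 / (m : ℝ)) * ∑ j ∈ Finset.range m,
        (1 / (l : ℝ)) * ∑ i ∈ Finset.range l, Q (zs i ω) (τs j ω) - R
        = (1/((m:ℝ)*(l:ℝ))) * ∑ j ∈ Finset.range m, ∑ i ∈ Finset.range l,
            (Q (zs i ω) (τs j ω) - R) := by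
      intro ω
      rw [← Finset.mul_sum]
      have hsum : ∑ j ∈ Finset.range m, ∑ i ∈ Finset.range l, (Q (zs i ω) (τs j ω) - R)
          = (∑ j ∈ Finset.range m, ∑ i ∈ Finset.range l, Q (zs i ω) (τs j ω))
              - (m:ℝ) * (l:ℝ) * R := by
        simp [Finset.sum_sub_distrib, Finset.sum_const, Finset.card_range]
        ring
      rw [hsum]
      field_simp
    simp_rw [hrepr, mul_pow]
    rw [integral_const_mul]
    have hb := sum_sq_bound P (fun i j ω => Q (zs i ω) (τs j ω) - R) hYmeas hC.le
      (fun i j ω => hYbd _ _) hzero m l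
    have hpos : (0:ℝ) ≤ (1/((m:ℝ)*(l:ℝ)))^2 := by positivity
    calc (1/((m:ℝ)*(l:ℝ)))^2 * ∫ ω, (∑ j ∈ Finset.range m, ∑ i ∈ Finset.range l,
            (Q (zs i ω) (τs j ω) - R))^2 ∂P
        ≤ (1/((m:ℝ)*(l:ℝ)))^2 * (C^2 * ((m:ℝ)^2 * l + m * l^2)) :=
          mul_le_mul_of_nonneg_left hb hpos
      _ = C^2 * (1/(m:ℝ) + 1/(l:ℝ)) := by field_simp; ring
  -- choose M
  refine ⟨Nat.ceil ((C^2 + D^2)/(δ*ε^2)) + 1, ?_⟩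
  intro m hm l hl
  have hm1 : 1 ≤ m := le_trans (Nat.le_add_left 1 _) hm
  have hmpos : (0:ℝ) < m := by exact_mod_cast hm1
  have hlog : (0:ℝ) ≤ Real.log m := Real.log_nonneg (by exact_mod_cast hm1)
  have hterm : (0:ℝ) ≤ 2 * C^2 / ε^2 * Real.log m := by positivity
  have hlgt : C^2 / D^2 * m < l := by linarith
  have hcm : (0:ℝ) < C^2/D^2 * m := by positivity
  have hlposR : (0:ℝ) < l := lt_trans hcm hlgt
  have hl1 : 1 ≤ l := by
    have : 0 < l := by exact_mod_cast hlposR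
    omega
  have hS : ∀ ω : Ω, Az ≤ (1 / (m : ℝ)) * ∑ j ∈ Finset.range m,
      (1 / (l : ℝ)) * ∑ i ∈ Finset.range l, Q (zs i ω) (τs j ω) ∧
      (1 / (m : ℝ)) * ∑ j ∈ Finset.range m,
      (1 / (l : ℝ)) * ∑ i ∈ Finset.range l, Q (zs i ω) (τs j ω) ≤ Bz := by
    intro ω
    refine avg_mem hm1 fun j _ => ?_
    exact avg_mem hl1 fun i _ => hQbd _ _
  have key := hmom m l hm1 hl1
  set f : Ω → ℝ := fun ω => ((1 / (m : ℝ)) * ∑ j ∈ Finset.range m,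
      (1 / (l : ℝ)) * ∑ i ∈ Finset.range l, Q (zs i ω) (τs j ω) - R)^2 with hfdef
  have hSmeas : Measurable fun ω => (1 / (m : ℝ)) * ∑ j ∈ Finset.range m,
      (1 / (l : ℝ)) * ∑ i ∈ Finset.range l, Q (zs i ω) (τs j ω) := by
    apply Measurable.const_mul
    apply Finset.measurable_sum
    intro j _
    exact (Finset.measurable_sum _ fun i _ => hKmeas i j).const_mul _
  have hfmeas : Measurable f := (hSmeas.sub measurable_const).pow_const 2
  have hfbd : ∀ ω, |f ω| ≤ C^2 := by
    intro ω
    have h := hS ω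
    simp only [hfdef]
    rw [abs_of_nonneg (sq_nonneg _)]
    apply sq_le_sq'
    · rw [hCdef]; simp only [neg_sub]; linarith [h.1, hRZ.2]
    · rw [hCdef]; linarith [h.2, hRZ.1]
  have hfint : Integrable f P := int_of_bdd hfmeas.aestronglyMeasurable hfbd
  have markov := mul_meas_ge_le_integral_of_nonneg
    (Filter.Eventually.of_forall fun ω => sq_nonneg _) hfint (ε^2)
  have hinv : (1:ℝ)/l ≤ D^2/(C^2*m) := by
    have h1 : 1/(l:ℝ) ≤ 1/(C^2/D^2*m) := one_div_le_one_div_of_le hcm hlgt.le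
    have h2 : 1/(C^2/D^2*(m:ℝ)) = D^2/(C^2*m) := by field_simp
    rw [h2] at h1
    exact h1
  have bound2 : C^2 * (1/(m:ℝ) + 1/(l:ℝ)) ≤ (C^2 + D^2)/(m:ℝ) := by
    have h3 : C^2 * (1/(m:ℝ) + 1/(l:ℝ)) ≤ C^2 * (1/(m:ℝ) + D^2/(C^2*m)) :=
      mul_le_mul_of_nonneg_left (by linarith) (sq_nonneg C)
    have h4 : C^2 * (1/(m:ℝ) + D^2/(C^2*(m:ℝ))) = (C^2 + D^2)/(m:ℝ) := by
      field_simp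
    linarith
  have h3 : ∫ ω, f ω ∂P ≤ (C^2 + D^2)/(m:ℝ) := le_trans key bound2
  have htr : (P {x | ε^2 ≤ f x}).toReal ≤ (C^2+D^2)/((m:ℝ)*ε^2) := by
    rw [le_div_iff₀ (by positivity)]
    have h5 : ε ^ 2 * (P {x | ε ^ 2 ≤ f x}).toReal ≤ (C^2 + D^2)/(m:ℝ) :=
      le_trans markov h3
    have h6 : (C^2 + D^2)/(m:ℝ) * (m:ℝ) = C^2 + D^2 := by field_simp
    nlinarith [h5, hmpos, ENNReal.toReal_nonneg (a := P {x | ε^2 ≤ f x})]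
  have hflt : (C^2+D^2)/((m:ℝ)*ε^2) < δ := by
    have hmge : ((C^2+D^2)/(δ*ε^2)) < (m:ℝ) := by
      calc (C^2+D^2)/(δ*ε^2) ≤ ((Nat.ceil ((C^2+D^2)/(δ*ε^2)) : ℕ) : ℝ) := Nat.le_ceil _
        _ < m := by exact_mod_cast Nat.lt_of_lt_of_le (Nat.lt_succ_self _) hm
    rw [div_lt_iff₀ (by positivity)]
    have h7 := (div_lt_iff₀ (by positivity : (0:ℝ) < δ*ε^2)).mp hmge
    nlinarith
  have hsub : {ω | R - (1 / (m : ℝ)) * ∑ j ∈ Finset.range m,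
      (1 / (l : ℝ)) * ∑ i ∈ Finset.range l, Q (zs i ω) (τs j ω) > ε} ⊆
      {ω | ε^2 ≤ f ω} := by
    intro ω hω
    simp only [Set.mem_setOf_eq] at hω
    simp only [Set.mem_setOf_eq, hfdef]
    nlinarith [hω, hε]
  refine lt_of_le_of_lt (measure_mono hsub) ?_
  calc P {ω | ε^2 ≤ f ω}
      = ENNReal.ofReal ((P {ω | ε^2 ≤ f ω}).toReal) :=
        (ENNReal.ofReal_toReal (measure_ne_top P _)).symm
    _ < ENNReal.ofReal δ := by
        rw [ENNReal.ofReal_lt_ofReal_iff hδ]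
        exact lt_of_le_of_lt htr hflt
end

section
/- For every ε > 0 and all positive integers m, l, the following inequality holds: P( sup_{α∈Λ} ( R(α) − R_emp(α,m,l) ) > ε ) ≤ P( sup_{α∈Λ} ( ∫_T R^lo(τ,α) dν(τ) − (1/m) Σ_{j=1}^m R^lo(τ_j,α) ) > ε/2 ) + Σ_{j=1}^m P( sup_{α∈Λ} ( ∫_Z Q(z,τ_j,α) dμ(z) − (1/l) Σ_{i=1}^l Q(z_i,τ_j,α) ) > ε/2 ). -/
open MeasureTheory ProbabilityTheory

/-- Decomposition inequality for the uniform (over `α ∈ Λ`) one-sided deviation of the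
empirical global risk from the global risk. -/
theorem stmt_8 {Ω Z T : Type*} {Λ : Type*} [Countable Λ] [Nonempty Λ]
    [MeasurableSpace Ω] [MeasurableSpace Z] [MeasurableSpace T]
    (P : Measure Ω) [IsProbabilityMeasure P]
    (μ : Measure Z) [IsProbabilityMeasure μ] (ν : Measure T) [IsProbabilityMeasure ν]
    (zs : ℕ → Ω → Z) (τs : ℕ → Ω → T)
    (hzmeas : ∀ i, Measurable (zs i)) (hτmeas : ∀ j, Measurable (τs j))
    (hzlaw : ∀ i, Measure.map (zs i) P = μ) (hτlaw : ∀ j, Measure.map (τs j) P = ν)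
    (hziid : iIndepFun zs P)
    (hτiid : iIndepFun τs P)
    (hcross : IndepFun (fun ω i => zs i ω) (fun ω j => τs j ω) P)
    (Q : Z → T → Λ → ℝ) (hQmeas : ∀ α, Measurable fun p : Z × T => Q p.1 p.2 α)
    (Az Bz Aτ Bτ : ℝ) (hzlt : Az < Bz) (hτlt : Aτ < Bτ)
    (hQbd : ∀ z τ α, Az ≤ Q z τ α ∧ Q z τ α ≤ Bz)
    (hRlobd : ∀ τ α, Aτ ≤ (∫ z, Q z τ α ∂μ) ∧ (∫ z, Q z τ α ∂μ) ≤ Bτ)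
    (ε : ℝ) (hε : 0 < ε) (m l : ℕ) (hm : 0 < m) (hl : 0 < l) :
    P {ω | (⨆ α : Λ, ((∫ τ, ∫ z, Q z τ α ∂μ ∂ν) -
        (1 / (m : ℝ)) * ∑ j ∈ Finset.range m,
          (1 / (l : ℝ)) * ∑ i ∈ Finset.range l, Q (zs i ω) (τs j ω) α)) > ε}
      ≤ P {ω | (⨆ α : Λ, ((∫ τ, ∫ z, Q z τ α ∂μ ∂ν) -
            (1 / (m : ℝ)) * ∑ j ∈ Finset.range m, (∫ z, Q z (τs j ω) α ∂μ))) > ε / 2}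
        + ∑ j ∈ Finset.range m,
            P {ω | (⨆ α : Λ, ((∫ z, Q z (τs j ω) α ∂μ) -
              (1 / (l : ℝ)) * ∑ i ∈ Finset.range l, Q (zs i ω) (τs j ω) α)) > ε / 2} := by
  have hm0 : (0:ℝ) < (m:ℝ) := by exact_mod_cast hm
  have hl0 : (0:ℝ) < (l:ℝ) := by exact_mod_cast hl
  -- measurability and integrability of the local risk
  have hgmeas : ∀ α : Λ, StronglyMeasurable fun τ => ∫ z, Q z τ α ∂μ := by
    intro α
    exact (hQmeas α).stronglyMeasurable.integral_prod_left'
  have hgint : ∀ α : Λ, Integrable (fun τ => ∫ z, Q z τ α ∂μ) ν := by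
    intro α
    refine (integrable_const (max |Aτ| |Bτ|)).mono' (hgmeas α).aestronglyMeasurable ?_
    filter_upwards with τ
    rcases hRlobd τ α with ⟨h1, h2⟩
    rw [Real.norm_eq_abs, abs_le]
    constructor
    · have ha := neg_abs_le Aτ
      have hb := le_max_left |Aτ| |Bτ|
      linarith
    · have ha := le_abs_self Bτ
      have hb := le_max_right |Aτ| |Bτ|
      linarith
  -- global risk bounded above by Bτ
  have hA : ∀ α : Λ, (∫ τ, ∫ z, Q z τ α ∂μ ∂ν) ≤ Bτ := by
    intro α
    calc (∫ τ, ∫ z, Q z τ α ∂μ ∂ν) ≤ ∫ _τ, Bτ ∂ν :=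
          integral_mono (hgint α) (integrable_const _) (fun τ => (hRlobd τ α).2)
      _ = Bτ := by simp
  -- lower bound on empirical local averages
  have hCz : ∀ (ω : Ω) (j : ℕ) (α : Λ),
      Az ≤ (1 / (l : ℝ)) * ∑ i ∈ Finset.range l, Q (zs i ω) (τs j ω) α := by
    intro ω j α
    have hsum : (l:ℝ) * Az ≤ ∑ i ∈ Finset.range l, Q (zs i ω) (τs j ω) α := by
      calc (l:ℝ) * Az = ∑ _i ∈ Finset.range l, Az := by
            simp [Finset.sum_const, mul_comm]
        _ ≤ _ := Finset.sum_le_sum fun i _ => (hQbd (zs i ω) (τs j ω) α).1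
    have := mul_le_mul_of_nonneg_left hsum (le_of_lt (one_div_pos.mpr hl0))
    calc Az = (1/(l:ℝ)) * ((l:ℝ) * Az) := by field_simp
      _ ≤ _ := this
  -- bounded above families (for le_ciSup)
  have hbdd1 : ∀ ω : Ω, BddAbove (Set.range fun α : Λ =>
      (∫ τ, ∫ z, Q z τ α ∂μ ∂ν) -
        (1 / (m : ℝ)) * ∑ j ∈ Finset.range m, (∫ z, Q z (τs j ω) α ∂μ)) := by
    intro ω
    refine ⟨Bτ - Aτ, ?_⟩
    rintro x ⟨α, rfl⟩
    have h1 : (m:ℝ) * Aτ ≤ ∑ j ∈ Finset.range m, (∫ z, Q z (τs j ω) α ∂μ) := by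
      calc (m:ℝ) * Aτ = ∑ _j ∈ Finset.range m, Aτ := by simp [Finset.sum_const, mul_comm]
        _ ≤ _ := Finset.sum_le_sum fun j _ => (hRlobd (τs j ω) α).1
    have h2 : Aτ ≤ (1 / (m : ℝ)) * ∑ j ∈ Finset.range m, (∫ z, Q z (τs j ω) α ∂μ) := by
      have := mul_le_mul_of_nonneg_left h1 (le_of_lt (one_div_pos.mpr hm0))
      calc Aτ = (1/(m:ℝ)) * ((m:ℝ) * Aτ) := by field_simp
        _ ≤ _ := this
    have := hA α
    linarith
  have hbdd2 : ∀ (ω : Ω) (j : ℕ), BddAbove (Set.range fun α : Λ =>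
      (∫ z, Q z (τs j ω) α ∂μ) -
        (1 / (l : ℝ)) * ∑ i ∈ Finset.range l, Q (zs i ω) (τs j ω) α) := by
    intro ω j
    refine ⟨Bτ - Az, ?_⟩
    rintro x ⟨α, rfl⟩
    have := (hRlobd (τs j ω) α).2
    have := hCz ω j α
    linarith
  -- set inclusion
  have hsub : {ω | (⨆ α : Λ, ((∫ τ, ∫ z, Q z τ α ∂μ ∂ν) -
        (1 / (m : ℝ)) * ∑ j ∈ Finset.range m,
          (1 / (l : ℝ)) * ∑ i ∈ Finset.range l, Q (zs i ω) (τs j ω) α)) > ε}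
      ⊆ {ω | (⨆ α : Λ, ((∫ τ, ∫ z, Q z τ α ∂μ ∂ν) -
            (1 / (m : ℝ)) * ∑ j ∈ Finset.range m, (∫ z, Q z (τs j ω) α ∂μ))) > ε / 2}
        ∪ ⋃ j ∈ Finset.range m,
            {ω | (⨆ α : Λ, ((∫ z, Q z (τs j ω) α ∂μ) -
              (1 / (l : ℝ)) * ∑ i ∈ Finset.range l, Q (zs i ω) (τs j ω) α)) > ε / 2} := by
    intro ω hω
    simp only [Set.mem_setOf_eq] at hω
    -- extract a witness α
    have hex : ∃ α : Λ, ε < (∫ τ, ∫ z, Q z τ α ∂μ ∂ν) -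
        (1 / (m : ℝ)) * ∑ j ∈ Finset.range m,
          (1 / (l : ℝ)) * ∑ i ∈ Finset.range l, Q (zs i ω) (τs j ω) α := by
      by_contra h
      push_neg at h
      exact absurd (ciSup_le h) (not_le.mpr hω)
    obtain ⟨α, hα⟩ := hex
    set A := (∫ τ, ∫ z, Q z τ α ∂μ ∂ν) with hAdef
    set B := (1 / (m : ℝ)) * ∑ j ∈ Finset.range m, (∫ z, Q z (τs j ω) α ∂μ) with hBdef
    by_cases hg : ε / 2 < A - B
    · left
      have := le_ciSup (hbdd1 ω) α
      simp only [Set.mem_setOf_eq]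
      exact lt_of_lt_of_le hg this
    · right
      push_neg at hg
      -- then the averaged local deviations exceed ε/2
      have hsum : ε / 2 < (1 / (m : ℝ)) * ∑ j ∈ Finset.range m,
          ((∫ z, Q z (τs j ω) α ∂μ) -
            (1 / (l : ℝ)) * ∑ i ∈ Finset.range l, Q (zs i ω) (τs j ω) α) := by
      -- A - C = (A - B) + (B - C)
        have hkey : (1 / (m : ℝ)) * ∑ j ∈ Finset.range m,
            ((∫ z, Q z (τs j ω) α ∂μ) -
              (1 / (l : ℝ)) * ∑ i ∈ Finset.range l, Q (zs i ω) (τs j ω) α)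
            = B - (1 / (m : ℝ)) * ∑ j ∈ Finset.range m,
              (1 / (l : ℝ)) * ∑ i ∈ Finset.range l, Q (zs i ω) (τs j ω) α := by
          rw [hBdef, Finset.sum_sub_distrib, mul_sub]
        rw [hkey]
        linarith
      -- extract a coordinate j
      have hj : ∃ j ∈ Finset.range m, ε / 2 <
          (∫ z, Q z (τs j ω) α ∂μ) -
            (1 / (l : ℝ)) * ∑ i ∈ Finset.range l, Q (zs i ω) (τs j ω) α := by
        by_contra h
        push_neg at h
        have : ∑ j ∈ Finset.range m,
            ((∫ z, Q z (τs j ω) α ∂μ) -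
              (1 / (l : ℝ)) * ∑ i ∈ Finset.range l, Q (zs i ω) (τs j ω) α)
            ≤ (m:ℝ) * (ε/2) := by
          calc _ ≤ ∑ _j ∈ Finset.range m, (ε/2) := Finset.sum_le_sum h
            _ = (m:ℝ) * (ε/2) := by simp [Finset.sum_const, mul_comm]
        have h2 : (1 / (m : ℝ)) * ∑ j ∈ Finset.range m,
            ((∫ z, Q z (τs j ω) α ∂μ) -
              (1 / (l : ℝ)) * ∑ i ∈ Finset.range l, Q (zs i ω) (τs j ω) α)
            ≤ (1/(m:ℝ)) * ((m:ℝ) * (ε/2)) :=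
          mul_le_mul_of_nonneg_left this (le_of_lt (one_div_pos.mpr hm0))
        have h3 : (1/(m:ℝ)) * ((m:ℝ) * (ε/2)) = ε/2 := by field_simp
        rw [h3] at h2
        linarith
      obtain ⟨j, hjm, hjlt⟩ := hj
      refine Set.mem_biUnion hjm ?_
      simp only [Set.mem_setOf_eq]
      exact lt_of_lt_of_le hjlt (le_ciSup (hbdd2 ω j) α)
  calc P _ ≤ P _ := measure_mono hsub
    _ ≤ _ + P (⋃ j ∈ Finset.range m,
            {ω | (⨆ α : Λ, ((∫ z, Q z (τs j ω) α ∂μ) -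
              (1 / (l : ℝ)) * ∑ i ∈ Finset.range l, Q (zs i ω) (τs j ω) α)) > ε / 2}) :=
        measure_union_le _ _
    _ ≤ _ := by
        gcongr
        exact measure_biUnion_finset_le _ _
end

section
/- (Equivalent Theorem, uniform convergence implies consistency.) Suppose there exist constants a and A with a ≤ R(α) ≤ A for all α ∈ Λ. If uniform one-sided convergence takes place — i.e., for every ε > 0 and δ > 0 there exists M such that for all m ≥ M and all l satisfying the coupled sample rule for ε, P( sup_{α∈Λ} ( R(α) − R_emp(α,m,l) ) > ε ) < δ — then the empirical global risk minimization method is strictly consistent on the set {Q(·,·,α) : α ∈ Λ}. -/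
open MeasureTheory ProbabilityTheory

/-- The global risk `R(α) = ∫_T ∫_Z Q(z,τ,α) dμ(z) dν(τ)`. -/
noncomputable def globalRisk {Z T Λ : Type*} [MeasurableSpace Z] [MeasurableSpace T]
    (μ : Measure Z) (ν : Measure T) (Q : Z → T → Λ → ℝ) (α : Λ) : ℝ :=
  ∫ τ, ∫ z, Q z τ α ∂μ ∂ν

/-- The empirical global risk `R_emp(α, m, l) = (1/m) Σ_j (1/l) Σ_i Q(z_i, τ_j, α)`. -/
noncomputable def empGlobalRisk {Ω Z T Λ : Type*} (zs : ℕ → Ω → Z) (τs : ℕ → Ω → T)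
    (Q : Z → T → Λ → ℝ) (m l : ℕ) (α : Λ) (ω : Ω) : ℝ :=
  (1 / (m : ℝ)) * ∑ j ∈ Finset.range m,
    (1 / (l : ℝ)) * ∑ i ∈ Finset.range l, Q (zs i ω) (τs j ω) α

/-- The coupled sample rule: `l > (2(B_z−A_z)²/ε²) ln m + ((B_z−A_z)²/(B_τ−A_τ)²) m`. -/
def coupledRule (Az Bz Aτ Bτ ε : ℝ) (m l : ℕ) : Prop :=
  (l : ℝ) > 2 * (Bz - Az) ^ 2 / ε ^ 2 * Real.log m + (Bz - Az) ^ 2 / (Bτ - Aτ) ^ 2 * m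

/-- Strict consistency of empirical global risk minimization: for every `c` such that
`Λ(c) = {α : R(α) ≥ c}` is nonempty, the infimum of the empirical global risk over `Λ(c)`
converges in probability to the infimum of the global risk over `Λ(c)`, along the coupled
sample rule. -/
def StrictlyConsistent {Ω Z T Λ : Type*} [MeasurableSpace Ω] [MeasurableSpace Z]
    [MeasurableSpace T] (P : Measure Ω) (μ : Measure Z) (ν : Measure T)
    (zs : ℕ → Ω → Z) (τs : ℕ → Ω → T) (Q : Z → T → Λ → ℝ) (Az Bz Aτ Bτ : ℝ) : Prop :=
  ∀ c : ℝ, (∃ α, c ≤ globalRisk μ ν Q α) → ∀ ε > (0 : ℝ), ∀ δ > (0 : ℝ), ∃ M : ℕ,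
    ∀ m ≥ M, ∀ l : ℕ, coupledRule Az Bz Aτ Bτ ε m l →
      P {ω | |(⨅ a : {a : Λ // c ≤ globalRisk μ ν Q a},
                empGlobalRisk zs τs Q m l a.1 ω) -
              ⨅ a : {a : Λ // c ≤ globalRisk μ ν Q a}, globalRisk μ ν Q a.1| > ε}
        < ENNReal.ofReal δ

/-- Uniform one-sided convergence of the empirical global risks to their expectations,
along the coupled sample rule. -/
def UniformOneSidedConvergence {Ω Z T Λ : Type*} [MeasurableSpace Ω] [MeasurableSpace Z]
    [MeasurableSpace T] (P : Measure Ω) (μ : Measure Z) (ν : Measure T)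
    (zs : ℕ → Ω → Z) (τs : ℕ → Ω → T) (Q : Z → T → Λ → ℝ) (Az Bz Aτ Bτ : ℝ) : Prop :=
  ∀ ε > (0 : ℝ), ∀ δ > (0 : ℝ), ∃ M : ℕ,
    ∀ m ≥ M, ∀ l : ℕ, coupledRule Az Bz Aτ Bτ ε m l →
      P {ω | (⨆ α : Λ, (globalRisk μ ν Q α - empGlobalRisk zs τs Q m l α ω)) > ε}
        < ENNReal.ofReal δ

/-- Bounded measurable functions are integrable on finite measure spaces. -/
lemma aux_integrable {X : Type*} [MeasurableSpace X] (ρ : Measure X) [IsFiniteMeasure ρ]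
    {f : X → ℝ} (hf : Measurable f) {C : ℝ} (hbd : ∀ x, |f x| ≤ C) :
    Integrable f ρ :=
  (integrable_const C).mono' hf.aestronglyMeasurable
    (Filter.Eventually.of_forall fun x => by simpa [Real.norm_eq_abs] using hbd x)

/-- Markov/Chebyshev style inequality. -/
lemma aux_cheb {Ω : Type*} [MeasurableSpace Ω] (P : Measure Ω) [IsProbabilityMeasure P]
    {f : Ω → ℝ} (hf : Measurable f) {D : ℝ} (hD : ∀ ω, |f ω| ≤ D) {t : ℝ} (ht : 0 < t) :
    P {ω | t < |f ω|} ≤ ENNReal.ofReal ((∫ ω, f ω ^ 2 ∂P) / t ^ 2) := by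
  have hint : Integrable (fun ω => f ω ^ 2) P := by
    refine aux_integrable P (hf.pow_const 2) (C := D ^ 2) fun ω => ?_
    calc |f ω ^ 2| = |f ω| ^ 2 := abs_pow (f ω) 2
    _ ≤ D ^ 2 := pow_le_pow_left₀ (abs_nonneg _) (hD ω) 2
  have h1 : {ω | t < |f ω|} ⊆ {x | t ^ 2 ≤ f x ^ 2} := fun ω h => by
    have h2 : t ≤ |f ω| := le_of_lt h
    calc t ^ 2 ≤ |f ω| ^ 2 := pow_le_pow_left₀ ht.le h2 2
    _ = f ω ^ 2 := sq_abs (f ω)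
  have h2 := mul_meas_ge_le_integral_of_nonneg
    (Filter.Eventually.of_forall fun ω => sq_nonneg (f ω)) hint (t ^ 2)
  calc P {ω | t < |f ω|} ≤ P {x | t ^ 2 ≤ f x ^ 2} := measure_mono h1
  _ = ENNReal.ofReal ((P {x | t ^ 2 ≤ f x ^ 2}).toReal) :=
      (ENNReal.ofReal_toReal (measure_ne_top P _)).symm
  _ ≤ ENNReal.ofReal ((∫ ω, f ω ^ 2 ∂P) / t ^ 2) := ENNReal.ofReal_le_ofReal (by
      rw [le_div_iff₀ (by positivity)]
      calc (P {x | t ^ 2 ≤ f x ^ 2}).toReal * t ^ 2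
          = t ^ 2 * (P {x | t ^ 2 ≤ f x ^ 2}).toReal := mul_comm _ _
      _ ≤ _ := h2)

/-- Averages of bounded sequences are bounded. -/
lemma aux_avg {f : ℕ → ℝ} {n : ℕ} (hn : 1 ≤ n) {A B : ℝ}
    (h : ∀ i ∈ Finset.range n, A ≤ f i ∧ f i ≤ B) :
    A ≤ (1 / (n : ℝ)) * ∑ i ∈ Finset.range n, f i ∧
      (1 / (n : ℝ)) * ∑ i ∈ Finset.range n, f i ≤ B := by
  have hn0 : (0 : ℝ) < n := by exact_mod_cast hn
  have hs1 : (n : ℝ) * A ≤ ∑ i ∈ Finset.range n, f i := by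
    have := Finset.card_nsmul_le_sum (Finset.range n) f A fun i hi => (h i hi).1
    simpa [Finset.card_range, nsmul_eq_mul] using this
  have hs2 : ∑ i ∈ Finset.range n, f i ≤ (n : ℝ) * B := by
    have := Finset.sum_le_card_nsmul (Finset.range n) f B fun i hi => (h i hi).2
    simpa [Finset.card_range, nsmul_eq_mul] using this
  constructor
  · calc A = 1 / (n : ℝ) * ((n : ℝ) * A) := by field_simp
    _ ≤ _ := mul_le_mul_of_nonneg_left hs1 (by positivity)
  · calc (1 / (n : ℝ)) * ∑ i ∈ Finset.range n, f i
        ≤ 1 / (n : ℝ) * ((n : ℝ) * B) := mul_le_mul_of_nonneg_left hs2 (by positivity)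
    _ = B := by field_simp

/-- Centered covariance vanishes when the second moment factorizes. -/
lemma aux_center {Ω : Type*} [MeasurableSpace Ω] (P : Measure Ω) [IsProbabilityMeasure P]
    {X X' : Ω → ℝ} {R R' : ℝ} (hXi : Integrable X P) (hX'i : Integrable X' P)
    (hXX'i : Integrable (fun ω => X ω * X' ω) P)
    (hX : ∫ ω, X ω ∂P = R) (hX' : ∫ ω, X' ω ∂P = R')
    (hXX' : ∫ ω, X ω * X' ω ∂P = R * R') :
    ∫ ω, (X ω - R) * (X' ω - R') ∂P = 0 := by
  have h : ∀ ω, (X ω - R) * (X' ω - R') =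
      X ω * X' ω - R' * X ω - R * X' ω + R * R' := fun ω => by ring
  have h1 : Integrable (fun ω => X ω * X' ω - R' * X ω) P := hXX'i.sub (hXi.const_mul R')
  have h2 : Integrable (fun ω => X ω * X' ω - R' * X ω - R * X' ω) P :=
    h1.sub (hX'i.const_mul R)
  simp_rw [h]
  rw [integral_add h2 (integrable_const _), integral_sub h1 (hX'i.const_mul R),
    integral_sub hXX'i (hXi.const_mul R'), integral_const_mul, integral_const_mul, hX, hX', hXX',
    integral_const]
  simp
  ring

/-- Mean of `Q(u, v, α)` equals the global risk when `u ⟂ v` with laws `μ, ν`. -/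
lemma aux_mean {Ω Z T Λ : Type*} [MeasurableSpace Ω] [MeasurableSpace Z] [MeasurableSpace T]
    (P : Measure Ω) [IsProbabilityMeasure P]
    (μ : Measure Z) [IsProbabilityMeasure μ] (ν : Measure T) [IsProbabilityMeasure ν]
    {u : Ω → Z} {v : Ω → T} (hu : Measurable u) (hv : Measurable v)
    (hul : Measure.map u P = μ) (hvl : Measure.map v P = ν) (hind : IndepFun u v P)
    (Q : Z → T → Λ → ℝ) (hQmeas : ∀ α, Measurable fun p : Z × T => Q p.1 p.2 α)
    {C : ℝ} (hQabs : ∀ z τ β, |Q z τ β| ≤ C) (α : Λ) :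
    ∫ ω, Q (u ω) (v ω) α ∂P = globalRisk μ ν Q α := by
  have hmap : Measure.map (fun ω => (u ω, v ω)) P = μ.prod ν := by
    rw [(indepFun_iff_map_prod_eq_prod_map_map hu.aemeasurable hv.aemeasurable).mp hind,
      hul, hvl]
  have hint : Integrable (fun p : Z × T => Q p.1 p.2 α) (μ.prod ν) :=
    aux_integrable _ (hQmeas α) (fun p => hQabs p.1 p.2 α)
  calc ∫ ω, Q (u ω) (v ω) α ∂P
      = ∫ p, Q p.1 p.2 α ∂(Measure.map (fun ω => (u ω, v ω)) P) :=
        (integral_map (hu.prodMk hv).aemeasurable (hQmeas α).aestronglyMeasurable).symm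
    _ = ∫ p, Q p.1 p.2 α ∂(μ.prod ν) := by rw [hmap]
    _ = ∫ z, ∫ τ, Q z τ α ∂ν ∂μ := integral_prod _ hint
    _ = ∫ τ, ∫ z, Q z τ α ∂μ ∂ν := integral_integral_swap (by exact hint)
    _ = globalRisk μ ν Q α := rfl

/-- Second moment factorization for distinct samples. -/
lemma aux_second {Ω Z T Λ : Type*} [MeasurableSpace Ω] [MeasurableSpace Z] [MeasurableSpace T]
    (P : Measure Ω) [IsProbabilityMeasure P]
    (μ : Measure Z) [IsProbabilityMeasure μ] (ν : Measure T) [IsProbabilityMeasure ν]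
    {u u' : Ω → Z} {v v' : Ω → T}
    (hu : Measurable u) (hu' : Measurable u') (hv : Measurable v) (hv' : Measurable v')
    (hul : Measure.map u P = μ) (hul' : Measure.map u' P = μ)
    (hvl : Measure.map v P = ν) (hvl' : Measure.map v' P = ν)
    (huu' : IndepFun u u' P) (hvv' : IndepFun v v' P)
    (hx : IndepFun (fun ω => (u ω, u' ω)) (fun ω => (v ω, v' ω)) P)
    (Q : Z → T → Λ → ℝ) (hQmeas : ∀ α, Measurable fun p : Z × T => Q p.1 p.2 α)
    {C : ℝ} (hQabs : ∀ z τ β, |Q z τ β| ≤ C) (hC0 : 0 ≤ C) (α : Λ) :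
    ∫ ω, Q (u ω) (v ω) α * Q (u' ω) (v' ω) α ∂P = (globalRisk μ ν Q α) ^ 2 := by
  have hmapu : Measure.map (fun ω => (u ω, u' ω)) P = μ.prod μ := by
    rw [(indepFun_iff_map_prod_eq_prod_map_map hu.aemeasurable hu'.aemeasurable).mp huu',
      hul, hul']
  have hmapv : Measure.map (fun ω => (v ω, v' ω)) P = ν.prod ν := by
    rw [(indepFun_iff_map_prod_eq_prod_map_map hv.aemeasurable hv'.aemeasurable).mp hvv',
      hvl, hvl']
  have hmap4 : Measure.map (fun ω => ((u ω, u' ω), (v ω, v' ω))) P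
      = (μ.prod μ).prod (ν.prod ν) := by
    rw [(indepFun_iff_map_prod_eq_prod_map_map
      ((hu.prodMk hu').aemeasurable) ((hv.prodMk hv').aemeasurable)).mp hx, hmapu, hmapv]
  have hFmeas : Measurable (fun p : (Z × Z) × (T × T) => Q p.1.1 p.2.1 α * Q p.1.2 p.2.2 α) :=
    ((hQmeas α).comp ((measurable_fst.fst).prodMk (measurable_snd.fst))).mul
      ((hQmeas α).comp ((measurable_fst.snd).prodMk (measurable_snd.snd)))
  have hFint : Integrable (fun p : (Z × Z) × (T × T) => Q p.1.1 p.2.1 α * Q p.1.2 p.2.2 α)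
      ((μ.prod μ).prod (ν.prod ν)) := by
    refine aux_integrable _ hFmeas (C := C * C) fun p => ?_
    calc |Q p.1.1 p.2.1 α * Q p.1.2 p.2.2 α| = |Q p.1.1 p.2.1 α| * |Q p.1.2 p.2.2 α| :=
        abs_mul _ _
    _ ≤ C * C := mul_le_mul (hQabs _ _ _) (hQabs _ _ _) (abs_nonneg _) hC0
  have hQint : Integrable (fun p : Z × T => Q p.1 p.2 α) (μ.prod ν) :=
    aux_integrable _ (hQmeas α) (fun p => hQabs p.1 p.2 α)
  have hswap : ∫ z, ∫ τ, Q z τ α ∂ν ∂μ = ∫ τ, ∫ z, Q z τ α ∂μ ∂ν :=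
    integral_integral_swap (by exact hQint)
  calc ∫ ω, Q (u ω) (v ω) α * Q (u' ω) (v' ω) α ∂P
      = ∫ p, Q p.1.1 p.2.1 α * Q p.1.2 p.2.2 α
          ∂(Measure.map (fun ω => ((u ω, u' ω), (v ω, v' ω))) P) :=
        (integral_map (((hu.prodMk hu').prodMk (hv.prodMk hv')).aemeasurable)
          hFmeas.aestronglyMeasurable).symm
    _ = ∫ p, Q p.1.1 p.2.1 α * Q p.1.2 p.2.2 α ∂((μ.prod μ).prod (ν.prod ν)) := by rw [hmap4]
    _ = ∫ zz, ∫ tt, Q zz.1 tt.1 α * Q zz.2 tt.2 α ∂(ν.prod ν) ∂(μ.prod μ) :=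
        integral_prod _ hFint
    _ = ∫ zz : Z × Z, (∫ τ, Q zz.1 τ α ∂ν) * (∫ τ, Q zz.2 τ α ∂ν) ∂(μ.prod μ) := by
        refine integral_congr_ae (Filter.Eventually.of_forall fun zz => ?_)
        exact integral_prod_mul (fun t => Q zz.1 t α) (fun t => Q zz.2 t α)
    _ = (∫ z, ∫ τ, Q z τ α ∂ν ∂μ) * (∫ z, ∫ τ, Q z τ α ∂ν ∂μ) :=
        integral_prod_mul (fun z => ∫ τ, Q z τ α ∂ν) (fun z => ∫ τ, Q z τ α ∂ν)
    _ = (globalRisk μ ν Q α) ^ 2 := by rw [hswap]; rw [sq]; rfl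

/-- Variance bound for the doubly-indexed empirical average. -/
lemma aux_var {Ω : Type*} [MeasurableSpace Ω] (P : Measure Ω) [IsProbabilityMeasure P]
    (Y : ℕ → ℕ → Ω → ℝ) (hYmeas : ∀ i j, Measurable (Y i j))
    {D : ℝ} (hD0 : 0 ≤ D) (hYabs : ∀ i j ω, |Y i j ω| ≤ D)
    (hcov0 : ∀ i i' j j', i ≠ i' → j ≠ j' → ∫ ω, Y i j ω * Y i' j' ω ∂P = 0)
    {m l : ℕ} (hm : 1 ≤ m) (hl : 1 ≤ l) :
    ∫ ω, ((1/((m:ℝ)*l)) * ∑ p ∈ Finset.range m ×ˢ Finset.range l, Y p.2 p.1 ω)^2 ∂P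
      ≤ D^2 * (1/(m:ℝ) + 1/(l:ℝ)) := by
  have hm0 : (0:ℝ) < m := by exact_mod_cast hm
  have hl0 : (0:ℝ) < l := by exact_mod_cast hl
  set s := Finset.range m ×ˢ Finset.range l with hs
  have hint : ∀ p q : ℕ × ℕ, Integrable (fun ω => Y p.2 p.1 ω * Y q.2 q.1 ω) P := fun p q =>
    aux_integrable P ((hYmeas _ _).mul (hYmeas _ _)) (C := D*D) fun ω => by
      calc |Y p.2 p.1 ω * Y q.2 q.1 ω| = |Y p.2 p.1 ω| * |Y q.2 q.1 ω| := abs_mul _ _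
      _ ≤ D * D := mul_le_mul (hYabs _ _ _) (hYabs _ _ _) (abs_nonneg _) hD0
  have hcovbd : ∀ p q : ℕ × ℕ, ∫ ω, Y p.2 p.1 ω * Y q.2 q.1 ω ∂P ≤ D^2 := fun p q => by
    calc ∫ ω, Y p.2 p.1 ω * Y q.2 q.1 ω ∂P ≤ ∫ _ω, D^2 ∂P := by
          refine integral_mono (hint p q) (integrable_const _) fun ω => ?_
          calc Y p.2 p.1 ω * Y q.2 q.1 ω ≤ |Y p.2 p.1 ω * Y q.2 q.1 ω| := le_abs_self _
          _ = |Y p.2 p.1 ω| * |Y q.2 q.1 ω| := abs_mul _ _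
          _ ≤ D * D := mul_le_mul (hYabs _ _ _) (hYabs _ _ _) (abs_nonneg _) hD0
          _ = D^2 := (sq D).symm
    _ = D^2 := by simp
  have hexp : ∫ ω, ((1/((m:ℝ)*l)) * ∑ p ∈ s, Y p.2 p.1 ω)^2 ∂P
      = (1/((m:ℝ)*l))^2 * ∑ p ∈ s, ∑ q ∈ s, ∫ ω, Y p.2 p.1 ω * Y q.2 q.1 ω ∂P := by
    have h1 : ∀ ω, ((1/((m:ℝ)*l)) * ∑ p ∈ s, Y p.2 p.1 ω)^2
        = (1/((m:ℝ)*l))^2 * ∑ p ∈ s, ∑ q ∈ s, Y p.2 p.1 ω * Y q.2 q.1 ω := fun ω => by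
      rw [mul_pow]
      congr 1
      rw [sq, Finset.sum_mul_sum]
    simp_rw [h1]
    rw [integral_const_mul]
    congr 1
    rw [integral_finset_sum s (fun p _ => integrable_finset_sum s (fun q _ => hint p q))]
    exact Finset.sum_congr rfl fun p _ => integral_finset_sum s fun q _ => hint p q
  rw [hexp]
  have hbound : ∑ p ∈ s, ∑ q ∈ s, ∫ ω, Y p.2 p.1 ω * Y q.2 q.1 ω ∂P
      ≤ ((m:ℝ)*l) * ((l:ℝ)*D^2 + (m:ℝ)*D^2) := by
    have key : ∀ p ∈ s, ∑ q ∈ s, ∫ ω, Y p.2 p.1 ω * Y q.2 q.1 ω ∂P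
        ≤ (l:ℝ)*D^2 + (m:ℝ)*D^2 := by
      intro p hp
      have hp' := Finset.mem_product.mp hp
      have step : ∀ q ∈ s, ∫ ω, Y p.2 p.1 ω * Y q.2 q.1 ω ∂P
          ≤ (if q.1 = p.1 then D^2 else 0) + (if q.2 = p.2 then D^2 else 0) := by
        intro q _
        by_cases h1 : q.1 = p.1
        · have hc := hcovbd p q
          have h2 : (0:ℝ) ≤ if q.2 = p.2 then D^2 else 0 := by positivity
          rw [if_pos h1]
          linarith
        · by_cases h2 : q.2 = p.2
          · have hc := hcovbd p q
            rw [if_neg h1, if_pos h2]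
            linarith
          · rw [hcov0 p.2 q.2 p.1 q.1 (fun h => h2 h.symm) (fun h => h1 h.symm)]
            simp [h1, h2]
      calc ∑ q ∈ s, ∫ ω, Y p.2 p.1 ω * Y q.2 q.1 ω ∂P
          ≤ ∑ q ∈ s, ((if q.1 = p.1 then D^2 else 0) + (if q.2 = p.2 then D^2 else 0)) :=
            Finset.sum_le_sum step
      _ = (∑ q ∈ s, (if q.1 = p.1 then D^2 else 0))
            + ∑ q ∈ s, (if q.2 = p.2 then D^2 else 0) := Finset.sum_add_distrib
      _ = (l:ℝ)*D^2 + (m:ℝ)*D^2 := by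
          congr 1
          · rw [hs, Finset.sum_product]
            calc (∑ x ∈ Finset.range m, ∑ _y ∈ Finset.range l,
                    if (x, _y).1 = p.1 then D^2 else 0)
                = ∑ x ∈ Finset.range m, (if x = p.1 then (l:ℝ)*D^2 else 0) := by
                  refine Finset.sum_congr rfl fun x _ => ?_
                  show (∑ _y ∈ Finset.range l, if x = p.1 then D ^ 2 else 0)
                    = if x = p.1 then (l:ℝ)*D^2 else 0
                  rw [Finset.sum_const, Finset.card_range, nsmul_eq_mul]
                  split_ifs <;> simp
            _ = (l:ℝ)*D^2 := by
                  rw [Finset.sum_ite_eq' (Finset.range m) p.1 (fun _ => (l:ℝ)*D^2),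
                    if_pos hp'.1]
          · rw [hs, Finset.sum_product]
            calc (∑ x ∈ Finset.range m, ∑ y ∈ Finset.range l,
                    if (x, y).2 = p.2 then D^2 else 0)
                = ∑ _x ∈ Finset.range m, D^2 := by
                  refine Finset.sum_congr rfl fun x _ => ?_
                  show (∑ y ∈ Finset.range l, if y = p.2 then D ^ 2 else 0) = D ^ 2
                  rw [Finset.sum_ite_eq' (Finset.range l) p.2 (fun _ => D^2), if_pos hp'.2]
            _ = (m:ℝ)*D^2 := by
                  rw [Finset.sum_const, Finset.card_range, nsmul_eq_mul]
    calc ∑ p ∈ s, ∑ q ∈ s, ∫ ω, Y p.2 p.1 ω * Y q.2 q.1 ω ∂P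
        ≤ ∑ _p ∈ s, ((l:ℝ)*D^2 + (m:ℝ)*D^2) := Finset.sum_le_sum key
    _ = ((m:ℝ)*l) * ((l:ℝ)*D^2 + (m:ℝ)*D^2) := by
        rw [Finset.sum_const, hs, Finset.card_product, Finset.card_range, Finset.card_range,
          nsmul_eq_mul]
        push_cast
        ring
  calc (1/((m:ℝ)*l))^2 * ∑ p ∈ s, ∑ q ∈ s, ∫ ω, Y p.2 p.1 ω * Y q.2 q.1 ω ∂P
      ≤ (1/((m:ℝ)*l))^2 * (((m:ℝ)*l) * ((l:ℝ)*D^2 + (m:ℝ)*D^2)) :=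
        mul_le_mul_of_nonneg_left hbound (by positivity)
  _ = D^2 * (1/(m:ℝ) + 1/(l:ℝ)) := by field_simp

set_option maxHeartbeats 1000000 in
theorem stmt_10 {Ω Z T : Type*} {Λ : Type*} [Countable Λ] [Nonempty Λ]
    [MeasurableSpace Ω] [MeasurableSpace Z] [MeasurableSpace T]
    (P : Measure Ω) [IsProbabilityMeasure P]
    (μ : Measure Z) [IsProbabilityMeasure μ] (ν : Measure T) [IsProbabilityMeasure ν]
    (zs : ℕ → Ω → Z) (τs : ℕ → Ω → T)
    (hzmeas : ∀ i, Measurable (zs i)) (hτmeas : ∀ j, Measurable (τs j))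
    (hzlaw : ∀ i, Measure.map (zs i) P = μ) (hτlaw : ∀ j, Measure.map (τs j) P = ν)
    (hziid : iIndepFun zs P)
    (hτiid : iIndepFun τs P)
    (hcross : IndepFun (fun ω i => zs i ω) (fun ω j => τs j ω) P)
    (Q : Z → T → Λ → ℝ) (hQmeas : ∀ α, Measurable fun p : Z × T => Q p.1 p.2 α)
    (Az Bz Aτ Bτ : ℝ) (hzlt : Az < Bz) (hτlt : Aτ < Bτ)
    (hQbd : ∀ z τ α, Az ≤ Q z τ α ∧ Q z τ α ≤ Bz)
    (hRlobd : ∀ τ α, Aτ ≤ (∫ z, Q z τ α ∂μ) ∧ (∫ z, Q z τ α ∂μ) ≤ Bτ)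
    (a A : ℝ) (hbd : ∀ α, a ≤ globalRisk μ ν Q α ∧ globalRisk μ ν Q α ≤ A)
    (hunif : UniformOneSidedConvergence P μ ν zs τs Q Az Bz Aτ Bτ) :
    StrictlyConsistent P μ ν zs τs Q Az Bz Aτ Bτ := by
  intro c hc ε hε δ hδ
  classical
  haveI hne : Nonempty {a : Λ // c ≤ globalRisk μ ν Q a} := by
    obtain ⟨α₀, h₀⟩ := hc; exact ⟨⟨α₀, h₀⟩⟩
  -- absolute bound on Q
  set C : ℝ := max |Az| |Bz| with hCdef
  have habs' : ∀ {x : ℝ}, Az ≤ x → x ≤ Bz → |x| ≤ C := by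
    intro x h1 h2
    rw [abs_le]
    refine ⟨?_, h2.trans ((le_abs_self Bz).trans (le_max_right _ _))⟩
    calc -C ≤ -|Az| := neg_le_neg (le_max_left _ _)
    _ ≤ Az := neg_abs_le Az
    _ ≤ x := h1
  have hQabs : ∀ z τ β, |Q z τ β| ≤ C := fun z τ β =>
    habs' (hQbd z τ β).1 (hQbd z τ β).2
  have hC0 : (0:ℝ) ≤ C := le_trans (abs_nonneg _) (le_max_left _ _)
  -- reference parameter α⋆
  set IR : ℝ := ⨅ a : {a : Λ // c ≤ globalRisk μ ν Q a}, globalRisk μ ν Q a.1 with hIRdef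
  obtain ⟨αs, hαs⟩ : ∃ a : {a : Λ // c ≤ globalRisk μ ν Q a},
      globalRisk μ ν Q a.1 < IR + ε / 2 := by
    refine exists_lt_of_ciInf_lt ?_
    rw [← hIRdef]
    linarith
  set Rst : ℝ := globalRisk μ ν Q αs.1 with hRstdef
  set D : ℝ := C + |Rst| with hDdef
  have hD0 : (0:ℝ) ≤ D := by positivity
  -- measurability of the sampled losses
  have hXmeas : ∀ i j, Measurable (fun ω => Q (zs i ω) (τs j ω) αs.1) := fun i j =>
    (hQmeas αs.1).comp ((hzmeas i).prodMk (hτmeas j))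
  have hYmeas : ∀ i j, Measurable (fun ω => Q (zs i ω) (τs j ω) αs.1 - Rst) := fun i j =>
    (hXmeas i j).sub measurable_const
  have hYabs : ∀ i j ω, |Q (zs i ω) (τs j ω) αs.1 - Rst| ≤ D := by
    intro i j ω
    calc |Q (zs i ω) (τs j ω) αs.1 - Rst| ≤ |Q (zs i ω) (τs j ω) αs.1| + |Rst| := abs_sub _ _
    _ ≤ C + |Rst| := add_le_add (hQabs _ _ _) le_rfl
  -- first and second moments
  have hmean : ∀ i j, ∫ ω, Q (zs i ω) (τs j ω) αs.1 ∂P = Rst := fun i j =>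
    aux_mean P μ ν (hzmeas i) (hτmeas j) (hzlaw i) (hτlaw j)
      (hcross.comp (measurable_pi_apply i) (measurable_pi_apply j)) Q hQmeas hQabs αs.1
  have hcov0 : ∀ i i' j j', i ≠ i' → j ≠ j' →
      ∫ ω, (Q (zs i ω) (τs j ω) αs.1 - Rst) * (Q (zs i' ω) (τs j' ω) αs.1 - Rst) ∂P = 0 := by
    intro i i' j j' hii hjj
    have hsecond : ∫ ω, Q (zs i ω) (τs j ω) αs.1 * Q (zs i' ω) (τs j' ω) αs.1 ∂P
        = Rst * Rst := by
      have h2 := aux_second P μ ν (hzmeas i) (hzmeas i') (hτmeas j) (hτmeas j')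
        (hzlaw i) (hzlaw i') (hτlaw j) (hτlaw j')
        (hziid.indepFun hii) (hτiid.indepFun hjj)
        (hcross.comp ((measurable_pi_apply i).prodMk (measurable_pi_apply i'))
          ((measurable_pi_apply j).prodMk (measurable_pi_apply j')))
        Q hQmeas hQabs hC0 αs.1
      rw [h2, ← hRstdef, sq]
    refine aux_center P (aux_integrable P (hXmeas i j) (fun ω => hQabs _ _ _))
      (aux_integrable P (hXmeas i' j') (fun ω => hQabs _ _ _)) ?_ (hmean i j) (hmean i' j')
      hsecond
    refine aux_integrable P ((hXmeas i j).mul (hXmeas i' j')) (C := C * C) fun ω => ?_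
    calc |Q (zs i ω) (τs j ω) αs.1 * Q (zs i' ω) (τs j' ω) αs.1|
        = |Q (zs i ω) (τs j ω) αs.1| * |Q (zs i' ω) (τs j' ω) αs.1| := abs_mul _ _
    _ ≤ C * C := mul_le_mul (hQabs _ _ _) (hQabs _ _ _) (abs_nonneg _) hC0
  -- empirical risk: bounds and measurability
  have hempbd : ∀ {m l : ℕ}, 1 ≤ m → 1 ≤ l → ∀ (β : Λ) (ω : Ω),
      Az ≤ empGlobalRisk zs τs Q m l β ω ∧ empGlobalRisk zs τs Q m l β ω ≤ Bz := by
    intro m l hm hl β ω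
    exact aux_avg hm (fun j _ => aux_avg hl (fun i _ => hQbd (zs i ω) (τs j ω) β))
  have hempmeas : ∀ (m l : ℕ) (β : Λ), Measurable (fun ω => empGlobalRisk zs τs Q m l β ω) := by
    intro m l β
    exact (Finset.measurable_sum _ (fun j _ =>
      (Finset.measurable_sum _ (fun i _ =>
        (hQmeas β).comp ((hzmeas i).prodMk (hτmeas j)))).const_mul _)).const_mul _
  -- constants for the Chebyshev step
  set c₀ : ℝ := (Bz - Az) ^ 2 / (Bτ - Aτ) ^ 2 with hc₀def
  have hc₀ : (0:ℝ) < c₀ := div_pos (pow_pos (sub_pos.mpr hzlt) 2) (pow_pos (sub_pos.mpr hτlt) 2)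
  set K : ℝ := D ^ 2 * (1 + 1 / c₀) with hKdef
  have hK0 : (0:ℝ) ≤ K := by positivity
  obtain ⟨M₁, hM₁⟩ := hunif ε hε (δ / 2) (half_pos hδ)
  obtain ⟨N, hN⟩ := exists_nat_gt (8 * K / (ε ^ 2 * δ))
  refine ⟨max M₁ (max N 1), ?_⟩
  intro m hm l hrule
  have hmM₁ : M₁ ≤ m := le_trans (le_max_left _ _) hm
  have hmN : N ≤ m := le_trans ((le_max_left _ _).trans (le_max_right _ _)) hm
  have hm1 : 1 ≤ m := le_trans ((le_max_right _ _).trans (le_max_right _ _)) hm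
  have hm0 : (0:ℝ) < m := by exact_mod_cast hm1
  -- consequences of the coupled rule
  have hrule' : (l : ℝ) > 2 * (Bz - Az) ^ 2 / ε ^ 2 * Real.log m + c₀ * m := hrule
  have hlog : (0:ℝ) ≤ Real.log m := Real.log_nonneg (by exact_mod_cast hm1)
  have ht1 : (0:ℝ) ≤ 2 * (Bz - Az) ^ 2 / ε ^ 2 * Real.log m := by positivity
  have hlc : c₀ * m < l := by linarith
  have hl0 : (0:ℝ) < l := lt_trans (mul_pos hc₀ hm0) hlc
  have hl1 : 1 ≤ l := by
    have : 0 < l := by exact_mod_cast hl0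
    omega
  -- the uniform-convergence event
  have hE1 := hM₁ m hmM₁ l hrule
  -- variance bound for α⋆
  have hvar := aux_var P (fun i j ω => Q (zs i ω) (τs j ω) αs.1 - Rst) hYmeas hD0 hYabs hcov0
    hm1 hl1
  have hS : ∀ ω : Ω, empGlobalRisk zs τs Q m l αs.1 ω - Rst
      = (1 / ((m:ℝ) * l)) * ∑ p ∈ Finset.range m ×ˢ Finset.range l,
          (Q (zs p.2 ω) (τs p.1 ω) αs.1 - Rst) := by
    intro ω
    have expand : ∑ p ∈ Finset.range m ×ˢ Finset.range l,
        (Q (zs p.2 ω) (τs p.1 ω) αs.1 - Rst)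
        = (∑ j ∈ Finset.range m, ∑ i ∈ Finset.range l, Q (zs i ω) (τs j ω) αs.1)
          - ((m:ℝ) * l) * Rst := by
      simp only [Finset.sum_product, Finset.sum_sub_distrib, Finset.sum_const,
        Finset.card_range, Finset.card_product, nsmul_eq_mul]
      push_cast
      ring
    rw [expand]
    have h1 : empGlobalRisk zs τs Q m l αs.1 ω
        = (1 / ((m:ℝ) * l)) * ∑ j ∈ Finset.range m, ∑ i ∈ Finset.range l,
            Q (zs i ω) (τs j ω) αs.1 := by
      show (1 / (m : ℝ)) * ∑ j ∈ Finset.range m,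
          (1 / (l : ℝ)) * ∑ i ∈ Finset.range l, Q (zs i ω) (τs j ω) αs.1 = _
      rw [Finset.mul_sum, Finset.mul_sum]
      exact Finset.sum_congr rfl fun j _ => by ring
    rw [h1, mul_sub]
    have hml : (1 / ((m:ℝ) * l)) * (((m:ℝ) * l) * Rst) = Rst := by
      have hm' : (m:ℝ) ≠ 0 := ne_of_gt hm0
      have hl' : (l:ℝ) ≠ 0 := ne_of_gt hl0
      field_simp
    rw [hml]
  have hvar' : ∫ ω, ((1 / ((m:ℝ) * l)) * ∑ p ∈ Finset.range m ×ˢ Finset.range l,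
      (Q (zs p.2 ω) (τs p.1 ω) αs.1 - Rst)) ^ 2 ∂P ≤ D ^ 2 * (1 / (m:ℝ) + 1 / (l:ℝ)) := hvar
  have hvar2 : ∫ ω, (empGlobalRisk zs τs Q m l αs.1 ω - Rst) ^ 2 ∂P
      ≤ D ^ 2 * (1 / (m:ℝ) + 1 / (l:ℝ)) := by
    refine le_trans (le_of_eq (integral_congr_ae
      (Filter.Eventually.of_forall fun ω => ?_))) hvar'
    show (empGlobalRisk zs τs Q m l αs.1 ω - Rst) ^ 2 = _
    rw [hS ω]
  have hvar3 : ∫ ω, (empGlobalRisk zs τs Q m l αs.1 ω - Rst) ^ 2 ∂P ≤ K / m := by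
    have h1l : 1 / (l:ℝ) ≤ 1 / (c₀ * m) := one_div_le_one_div_of_le (mul_pos hc₀ hm0) hlc.le
    have heq : D ^ 2 * (1 / (m:ℝ) + 1 / (c₀ * m)) = K / m := by
      rw [hKdef]
      field_simp
    calc ∫ ω, (empGlobalRisk zs τs Q m l αs.1 ω - Rst) ^ 2 ∂P
        ≤ D ^ 2 * (1 / (m:ℝ) + 1 / (l:ℝ)) := hvar2
    _ ≤ D ^ 2 * (1 / (m:ℝ) + 1 / (c₀ * m)) :=
        mul_le_mul_of_nonneg_left (add_le_add le_rfl h1l) (sq_nonneg D)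
    _ = K / m := heq
  -- Chebyshev for α⋆
  have hcheb : P {ω | ε / 2 < |empGlobalRisk zs τs Q m l αs.1 ω - Rst|}
      < ENNReal.ofReal (δ / 2) := by
    have hfD : ∀ ω, |empGlobalRisk zs τs Q m l αs.1 ω - Rst| ≤ D := by
      intro ω
      calc |empGlobalRisk zs τs Q m l αs.1 ω - Rst|
          ≤ |empGlobalRisk zs τs Q m l αs.1 ω| + |Rst| := abs_sub _ _
      _ ≤ C + |Rst| := add_le_add
          (habs' (hempbd hm1 hl1 αs.1 ω).1 (hempbd hm1 hl1 αs.1 ω).2) le_rfl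
    have h1 := aux_cheb P ((hempmeas m l αs.1).sub measurable_const) hfD (half_pos hε)
    refine lt_of_le_of_lt h1 ?_
    rw [ENNReal.ofReal_lt_ofReal_iff (half_pos hδ)]
    have hm8 : 8 * K / (ε ^ 2 * δ) < (m:ℝ) := lt_of_lt_of_le hN (by exact_mod_cast hmN)
    have h2 : (∫ ω, (empGlobalRisk zs τs Q m l αs.1 ω - Rst) ^ 2 ∂P) / (ε / 2) ^ 2
        ≤ (K / m) / ((ε / 2) ^ 2) :=
      (div_le_div_iff_of_pos_right (by positivity : (0:ℝ) < (ε / 2) ^ 2)).mpr hvar3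
    refine lt_of_le_of_lt h2 ?_
    rw [div_lt_iff₀ (by positivity : (0:ℝ) < (ε / 2) ^ 2), div_lt_iff₀ hm0]
    rw [div_lt_iff₀ (by positivity : (0:ℝ) < ε ^ 2 * δ)] at hm8
    nlinarith
  -- combine the two events
  have hsub : {ω | |(⨅ a : {a : Λ // c ≤ globalRisk μ ν Q a},
        empGlobalRisk zs τs Q m l a.1 ω) - IR| > ε}
      ⊆ {ω | (⨆ α : Λ, (globalRisk μ ν Q α - empGlobalRisk zs τs Q m l α ω)) > ε}
        ∪ {ω | ε / 2 < |empGlobalRisk zs τs Q m l αs.1 ω - Rst|} := by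
    intro ω hω
    simp only [Set.mem_setOf_eq] at hω
    set IE : ℝ := ⨅ a : {a : Λ // c ≤ globalRisk μ ν Q a},
      empGlobalRisk zs τs Q m l a.1 ω with hIEdef
    rcases le_or_gt 0 (IE - IR) with hsign | hsign
    · -- IE ≥ IR, so IE - IR > ε : use the Chebyshev event
      right
      have habs : |IE - IR| = IE - IR := abs_of_nonneg hsign
      rw [habs] at hω
      have hbddE : BddBelow (Set.range fun a : {a : Λ // c ≤ globalRisk μ ν Q a} =>
          empGlobalRisk zs τs Q m l a.1 ω) := by
        refine ⟨Az, ?_⟩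
        rintro x ⟨b, rfl⟩
        exact (hempbd hm1 hl1 b.1 ω).1
      have h2 : IE ≤ empGlobalRisk zs τs Q m l αs.1 ω := ciInf_le hbddE αs
      simp only [Set.mem_setOf_eq]
      have h3 : ε / 2 < empGlobalRisk zs τs Q m l αs.1 ω - Rst := by linarith [hαs]
      exact lt_of_lt_of_le h3 (le_abs_self _)
    · -- IE < IR, so IR - IE > ε : use the uniform convergence event
      left
      have habs : |IE - IR| = -(IE - IR) := abs_of_neg hsign
      rw [habs] at hω
      have h4 : IE < IR - ε := by linarith
      obtain ⟨b, hb⟩ := exists_lt_of_ciInf_lt h4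
      have hbddR : BddBelow (Set.range fun a : {a : Λ // c ≤ globalRisk μ ν Q a} =>
          globalRisk μ ν Q a.1) := by
        refine ⟨a, ?_⟩
        rintro x ⟨d, rfl⟩
        exact (hbd d.1).1
      have h5 : IR ≤ globalRisk μ ν Q b.1 := ciInf_le hbddR b
      have hbddS : BddAbove (Set.range fun β : Λ =>
          globalRisk μ ν Q β - empGlobalRisk zs τs Q m l β ω) := by
        refine ⟨A - Az, ?_⟩
        rintro x ⟨β, rfl⟩
        exact sub_le_sub (hbd β).2 (hempbd hm1 hl1 β ω).1
      have h6 : globalRisk μ ν Q b.1 - empGlobalRisk zs τs Q m l b.1 ω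
          ≤ ⨆ β : Λ, (globalRisk μ ν Q β - empGlobalRisk zs τs Q m l β ω) := le_ciSup hbddS b.1
      simp only [Set.mem_setOf_eq]
      have h7 : ε < globalRisk μ ν Q b.1 - empGlobalRisk zs τs Q m l b.1 ω := by linarith
      linarith
  calc P {ω | |(⨅ a : {a : Λ // c ≤ globalRisk μ ν Q a},
        empGlobalRisk zs τs Q m l a.1 ω) - IR| > ε}
      ≤ P ({ω | (⨆ α : Λ, (globalRisk μ ν Q α - empGlobalRisk zs τs Q m l α ω)) > ε}
          ∪ {ω | ε / 2 < |empGlobalRisk zs τs Q m l αs.1 ω - Rst|}) := measure_mono hsub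
  _ ≤ P {ω | (⨆ α : Λ, (globalRisk μ ν Q α - empGlobalRisk zs τs Q m l α ω)) > ε}
      + P {ω | ε / 2 < |empGlobalRisk zs τs Q m l αs.1 ω - Rst|} := measure_union_le _ _
  _ < ENNReal.ofReal (δ / 2) + ENNReal.ofReal (δ / 2) := ENNReal.add_lt_add hE1 hcheb
  _ = ENNReal.ofReal δ := by
      rw [← ENNReal.ofReal_add (by linarith) (by linarith)]
      norm_num
end
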